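/- Let M be a full-rank submodule of F[x]^q. If G = {g_1, ..., g_m} is a minimal Gröbner basis of M with respect to the top ordering with degrees ℓ_1, ..., ℓ_m and G̃ = {g̃_1, ..., g̃_m} is a minimal Gröbner basis of M with respect to the pot ordering with degrees ℓ̃_1, ..., ℓ̃_m, then ℓ_1 + ... + ℓ_m = ℓ̃_1 + ... + ℓ̃_m. -/

import Mathlib

open Polynomial

open scoped Classical

/-- Support of a polynomial vector: monomials `(degree, position)` ordered lexicographically,
which is the term-over-position (top) ordering. -/
noncomputable def vsupp {R : Type*} [CommRing R] {q : ℕ} (f : Fin q → R[X]) :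
    Finset (Lex (ℕ × Fin q)) :=
  Finset.univ.biUnion fun i => (f i).support.image fun α => toLex (α, i)

/-- Leading monomial w.r.t. the top ordering (`⊥` for the zero vector). -/
noncomputable def vlm {R : Type*} [CommRing R] {q : ℕ} (f : Fin q → R[X]) :
    WithBot (Lex (ℕ × Fin q)) := (vsupp f).max

/-- Degree of the leading monomial (junk value `0` for the zero vector). -/
noncomputable def vdeg {R : Type*} [CommRing R] {q : ℕ} (f : Fin q → R[X]) : ℕ :=
  ((vlm f).map fun m => (ofLex m).1).unbotD 0

/-- Leading position. -/
noncomputable def vlpos {R : Type*} [CommRing R] {q : ℕ} (f : Fin q → R[X]) : WithBot (Fin q) :=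
  (vlm f).map fun m => (ofLex m).2

/-- Leading coefficient. -/
noncomputable def vlc {R : Type*} [CommRing R] {q : ℕ} (f : Fin q → R[X]) : R :=
  ((vlm f).map fun m => (f (ofLex m).2).coeff (ofLex m).1).unbotD 0

/-- Leading term of a polynomial vector, as a polynomial vector. -/
noncomputable def vlt {R : Type*} [CommRing R] {q : ℕ} (f : Fin q → R[X]) : Fin q → R[X] :=
  ((vlm f).map fun m => fun j : Fin q =>
    if j = (ofLex m).2 then C ((f (ofLex m).2).coeff (ofLex m).1) * X ^ (ofLex m).1 else 0).unbotD 0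

/-- The leading term submodule `L(F)`. -/
noncomputable def ltSubmodule {R : Type*} [CommRing R] {q : ℕ} (S : Set (Fin q → R[X])) :
    Submodule R[X] (Fin q → R[X]) :=
  Submodule.span R[X] (vlt '' S)

/-- `G` is a Gröbner basis of `M`: `G ⊆ M` and `L(G) = L(M)`. -/
def IsGroebner {R : Type*} [CommRing R] {q : ℕ} (M : Submodule R[X] (Fin q → R[X]))
    (G : Finset (Fin q → R[X])) : Prop :=
  (G : Set (Fin q → R[X])) ⊆ M ∧
    ltSubmodule (G : Set (Fin q → R[X])) = ltSubmodule (M : Set (Fin q → R[X]))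

/-- One-step reduction of `f` to `h` modulo the finite set `Fs` (Adams–Loustaunau Def. 4.1.1). -/
def ReducesOneStep {R : Type*} [CommRing R] {q : ℕ} (Fs : Finset (Fin q → R[X]))
    (f h : Fin q → R[X]) : Prop :=
  f ≠ 0 ∧ ∃ (m : ℕ) (jv : Fin m → Fin q → R[X]) (α : Fin m → ℕ) (β : Fin m → R),
    0 < m ∧ (∀ i, jv i ∈ Fs) ∧ (∀ i, jv i ≠ 0) ∧ Function.Injective jv ∧ (∀ i, β i ≠ 0) ∧
    (∀ i, vlm f = (vlm (jv i)).map fun mm => toLex (α i + (ofLex mm).1, (ofLex mm).2)) ∧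
    vlt f = ∑ i, (C (β i) * X ^ α i) • vlt (jv i) ∧
    h = f - ∑ i, (C (β i) * X ^ α i) • jv i

/-- Minimal Gröbner basis: a Gröbner basis each of whose elements is irreducible
modulo the others. -/
def IsMinimalGroebner {R : Type*} [CommRing R] {q : ℕ} (M : Submodule R[X] (Fin q → R[X]))
    (G : Finset (Fin q → R[X])) : Prop :=
  IsGroebner M G ∧ ∀ g ∈ G, ∀ h, ¬ ReducesOneStep (G.erase g) g h

/-- Support of a polynomial vector: monomials `(position, degree)` ordered lexicographically,
which is the position-over-term (pot) ordering. -/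
noncomputable def vsuppPot {R : Type*} [CommRing R] {q : ℕ} (f : Fin q → R[X]) :
    Finset (Lex (Fin q × ℕ)) :=
  Finset.univ.biUnion fun i => (f i).support.image fun α => toLex (i, α)

/-- Leading monomial w.r.t. the pot ordering. -/
noncomputable def vlmPot {R : Type*} [CommRing R] {q : ℕ} (f : Fin q → R[X]) :
    WithBot (Lex (Fin q × ℕ)) := (vsuppPot f).max

/-- Degree of the pot leading monomial (junk value `0` for the zero vector). -/
noncomputable def vdegPot {R : Type*} [CommRing R] {q : ℕ} (f : Fin q → R[X]) : ℕ :=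
  ((vlmPot f).map fun m => (ofLex m).2).unbotD 0

/-- Leading term w.r.t. the pot ordering. -/
noncomputable def vltPot {R : Type*} [CommRing R] {q : ℕ} (f : Fin q → R[X]) : Fin q → R[X] :=
  ((vlmPot f).map fun m => fun j : Fin q =>
    if j = (ofLex m).1 then C ((f (ofLex m).1).coeff (ofLex m).2) * X ^ (ofLex m).2 else 0).unbotD 0

/-- The pot leading term submodule. -/
noncomputable def ltSubmodulePot {R : Type*} [CommRing R] {q : ℕ} (S : Set (Fin q → R[X])) :
    Submodule R[X] (Fin q → R[X]) :=
  Submodule.span R[X] (vltPot '' S)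

/-- `G` is a Gröbner basis of `M` w.r.t. the pot ordering. -/
def IsGroebnerPot {R : Type*} [CommRing R] {q : ℕ} (M : Submodule R[X] (Fin q → R[X]))
    (G : Finset (Fin q → R[X])) : Prop :=
  (G : Set (Fin q → R[X])) ⊆ M ∧
    ltSubmodulePot (G : Set (Fin q → R[X])) = ltSubmodulePot (M : Set (Fin q → R[X]))

/-- One-step reduction w.r.t. the pot ordering. -/
def ReducesOneStepPot {R : Type*} [CommRing R] {q : ℕ} (Fs : Finset (Fin q → R[X]))
    (f h : Fin q → R[X]) : Prop :=
  f ≠ 0 ∧ ∃ (m : ℕ) (jv : Fin m → Fin q → R[X]) (α : Fin m → ℕ) (β : Fin m → R),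
    0 < m ∧ (∀ i, jv i ∈ Fs) ∧ (∀ i, jv i ≠ 0) ∧ Function.Injective jv ∧ (∀ i, β i ≠ 0) ∧
    (∀ i, vlmPot f = (vlmPot (jv i)).map fun mm => toLex ((ofLex mm).1, α i + (ofLex mm).2)) ∧
    vltPot f = ∑ i, (C (β i) * X ^ α i) • vltPot (jv i) ∧
    h = f - ∑ i, (C (β i) * X ^ α i) • jv i

/-- Minimal Gröbner basis w.r.t. the pot ordering. -/
def IsMinimalGroebnerPot {R : Type*} [CommRing R] {q : ℕ} (M : Submodule R[X] (Fin q → R[X]))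
    (G : Finset (Fin q → R[X])) : Prop :=
  IsGroebnerPot M G ∧ ∀ g ∈ G, ∀ h, ¬ ReducesOneStepPot (G.erase g) g h

/-!
For every term order, the degree sum of a minimal Gröbner basis of a full-rank `M` equals
`dim_F (F[x]^q / M)`. Such a basis has exactly one element in each position `j`, with leading
monomial `x ^ L j e_j` say: minimality forbids two in the same position, and full rank puts a
nonzero multiple of `e_j` into `M`, whose leading monomial must be divisible by a leading
monomial of the basis. The `F`-span of the standard monomials `x ^ a e_j` with `a < L j` is then
a complement of `M`: it meets `M` trivially because every leading monomial of `M` is divisible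
by some `x ^ L j e_j`, and it spans modulo `M` by the division algorithm. Its dimension is
`∑ j, L j`.
-/

lemma exists_single_mem_of_rank_eq {R : Type*} [CommRing R] [IsDomain R] {q : ℕ}
    (M : Submodule R (Fin q → R)) (hrank : Module.rank R M = q) (j : Fin q) :
    ∃ p ≠ 0, Pi.single j p ∈ M := by
  by_contra! h
  let N := LinearMap.range (LinearMap.single R (fun _ : Fin q => R) j)
  have hinf : M ⊓ N = ⊥ := by
    refine eq_bot_iff.2 ?_
    rintro _ ⟨hM, p, rfl⟩
    by_cases hp : p = 0
    · simp [hp]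
    · exact absurd hM (h p hp)
  have hN : Module.rank R N = 1 := by
    rw [rank_range_of_injective _ (Pi.single_injective (M := fun _ : Fin q => R) j),
      Module.rank_self]
  have hsum := Submodule.rank_sup_add_rank_inf_eq M N
  rw [hinf, rank_bot, add_zero, hrank, hN] at hsum
  have hle := Submodule.rank_le (M ⊔ N)
  rw [rank_fin_fun, hsum] at hle
  norm_cast at hle
  omega

namespace TermOrder

variable {q : ℕ} {σ : Type*}

section Defs

/- `μ : σ` stands for the monomial `x ^ a e_j` with `e μ = (a, j)`. -/
variable (e : σ ≃ ℕ × Fin q)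

def shift (δ : ℕ) (μ : σ) : σ := e.symm (δ + (e μ).1, (e μ).2)

structure IsTermOrder [LinearOrder σ] : Prop where
  shift_strictMono (δ : ℕ) : StrictMono (shift e δ)

variable {R : Type*} [CommRing R]

noncomputable def coeffAt (f : Fin q → R[X]) (μ : σ) : R := (f (e μ).2).coeff (e μ).1

variable [LinearOrder σ]

noncomputable def support (f : Fin q → R[X]) : Finset σ :=
  Finset.univ.biUnion fun i => (f i).support.image fun a => e.symm (a, i)

noncomputable def lead (f : Fin q → R[X]) : WithBot σ := (support e f).max

noncomputable def leadDeg (f : Fin q → R[X]) : ℕ := ((lead e f).map fun μ => (e μ).1).unbotD 0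

noncomputable def leadTerm (f : Fin q → R[X]) : Fin q → R[X] :=
  ((lead e f).map fun μ => fun j : Fin q =>
    if j = (e μ).2 then C ((f (e μ).2).coeff (e μ).1) * X ^ (e μ).1 else 0).unbotD 0

def IsGroebnerBasis (M : Submodule R[X] (Fin q → R[X])) (G : Finset (Fin q → R[X])) : Prop :=
  (G : Set (Fin q → R[X])) ⊆ M ∧
    Submodule.span R[X] (leadTerm e '' G) =
      Submodule.span R[X] (leadTerm e '' (M : Set (Fin q → R[X])))

def ReducesInOneStep (Fs : Finset (Fin q → R[X])) (f h : Fin q → R[X]) : Prop :=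
  f ≠ 0 ∧ ∃ (m : ℕ) (jv : Fin m → Fin q → R[X]) (α : Fin m → ℕ) (β : Fin m → R),
    0 < m ∧ (∀ i, jv i ∈ Fs) ∧ (∀ i, jv i ≠ 0) ∧ Function.Injective jv ∧ (∀ i, β i ≠ 0) ∧
    (∀ i, lead e f = (lead e (jv i)).map (shift e (α i))) ∧
    leadTerm e f = ∑ i, (C (β i) * X ^ α i) • leadTerm e (jv i) ∧
    h = f - ∑ i, (C (β i) * X ^ α i) • jv i

def IsMinimalGroebnerBasis (M : Submodule R[X] (Fin q → R[X])) (G : Finset (Fin q → R[X])) :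
    Prop :=
  IsGroebnerBasis e M G ∧ ∀ g ∈ G, ∀ h, ¬ ReducesInOneStep e (G.erase g) g h

end Defs

variable {e : σ ≃ ℕ × Fin q}

section CommRing

variable {R : Type*} [CommRing R]

@[simp]
lemma coeffAt_symm (f : Fin q → R[X]) (a : ℕ) (j : Fin q) :
    coeffAt e f (e.symm (a, j)) = (f j).coeff a := by
  simp [coeffAt]

variable [LinearOrder σ]

lemma mem_support {f : Fin q → R[X]} {μ : σ} : μ ∈ support e f ↔ coeffAt e f μ ≠ 0 := by
  simp only [support, Finset.mem_biUnion, Finset.mem_image, Finset.mem_univ, true_and,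
    Polynomial.mem_support_iff]
  constructor
  · rintro ⟨j, a, ha, rfl⟩
    simpa using ha
  · exact fun h => ⟨(e μ).2, (e μ).1, h, by simp⟩

lemma lead_eq_bot {f : Fin q → R[X]} : lead e f = ⊥ ↔ f = 0 := by
  rw [lead, Finset.max_eq_bot, Finset.eq_empty_iff_forall_notMem]
  simp only [mem_support, ne_eq, not_not]
  constructor
  · intro h
    funext j
    ext a
    simpa using h (e.symm (a, j))
  · rintro rfl μ
    simp [coeffAt]

variable (e) in
lemma exists_lead_eq {f : Fin q → R[X]} (hf : f ≠ 0) : ∃ a j, lead e f = e.symm (a, j) := by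
  obtain ⟨μ, hμ⟩ := WithBot.ne_bot_iff_exists.1 (mt (lead_eq_bot (e := e)).1 hf)
  exact ⟨(e μ).1, (e μ).2, by simp [← hμ]⟩

lemma ne_zero_of_lead_eq {f : Fin q → R[X]} {μ : σ} (h : lead e f = μ) : f ≠ 0 := by
  rintro rfl
  exact WithBot.bot_ne_coe ((lead_eq_bot.2 rfl).symm.trans h)

lemma lead_lt_coe_iff {f : Fin q → R[X]} {μ : σ} :
    lead e f < μ ↔ ∀ ν, μ ≤ ν → coeffAt e f ν = 0 := by
  rw [lead, Finset.max, Finset.sup_lt_iff (WithBot.bot_lt_coe μ)]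
  simp only [mem_support, WithBot.coe_lt_coe]
  exact forall_congr' fun ν => by rw [← not_lt]; exact not_imp_comm

lemma lead_eq_coe_iff {f : Fin q → R[X]} {μ : σ} :
    lead e f = μ ↔ coeffAt e f μ ≠ 0 ∧ ∀ ν, μ < ν → coeffAt e f ν = 0 := by
  constructor
  · intro h
    refine ⟨mem_support.1 (Finset.mem_of_max h), fun ν hν => ?_⟩
    by_contra hne
    exact (Finset.le_max_of_eq (mem_support.2 hne) h).not_gt hν
  · rintro ⟨hμ, hgt⟩
    refine le_antisymm (Finset.max_le fun ν hν => ?_) (Finset.le_max (mem_support.2 hμ))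
    exact WithBot.coe_le_coe.2 (not_lt.1 fun h => mem_support.1 hν (hgt ν h))

lemma lead_sub_lt {f g : Fin q → R[X]} {μ : σ} (hf : lead e f = μ) (hg : lead e g = μ)
    (hc : coeffAt e f μ = coeffAt e g μ) : lead e (f - g) < μ := by
  refine lead_lt_coe_iff.2 fun ν hν => ?_
  have hsub : coeffAt e (f - g) ν = coeffAt e f ν - coeffAt e g ν := by simp [coeffAt]
  rcases hν.eq_or_lt with rfl | hlt
  · rw [hsub, hc, sub_self]
  · rw [hsub, (lead_eq_coe_iff.1 hf).2 ν hlt, (lead_eq_coe_iff.1 hg).2 ν hlt, sub_self]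

lemma leadDeg_eq {f : Fin q → R[X]} {a : ℕ} {j : Fin q} (h : lead e f = e.symm (a, j)) :
    leadDeg e f = a := by
  simp [leadDeg, h]

lemma leadTerm_eq {f : Fin q → R[X]} {a : ℕ} {j : Fin q} (h : lead e f = e.symm (a, j)) :
    leadTerm e f = Pi.single j (C ((f j).coeff a) * X ^ a) := by
  funext i
  simp [leadTerm, h, Pi.single_apply]

lemma leadTerm_zero : leadTerm e (0 : Fin q → R[X]) = 0 := by
  simp [leadTerm, lead_eq_bot.2 rfl]

lemma lead_single_C_mul_X_pow {c : R} (hc : c ≠ 0) (a : ℕ) (j : Fin q) :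
    lead e (Pi.single j (C c * X ^ a)) = e.symm (a, j) := by
  refine lead_eq_coe_iff.2 ⟨by simpa using hc, fun ν hν => ?_⟩
  obtain ⟨⟨b, i⟩, rfl⟩ := e.symm.surjective ν
  have hne : (b, i) ≠ (a, j) := fun h => hν.ne (by rw [h])
  rw [coeffAt_symm, Pi.single_apply]
  split_ifs with hij
  · subst hij
    rw [coeff_C_mul_X_pow, if_neg fun hba => hne (by rw [hba])]
  · rfl

lemma eq_of_lead_single {p : R[X]} {a : ℕ} {i j : Fin q}
    (h : lead e (Pi.single j p) = e.symm (a, i)) : i = j := by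
  by_contra hij
  exact (lead_eq_coe_iff.1 h).1 (by simp [hij])

lemma exists_lead_dvd_of_leadTerm_mem_span {S : Set (Fin q → R[X])} {f : Fin q → R[X]} {a : ℕ}
    {j : Fin q} (hf : lead e f = e.symm (a, j))
    (hmem : leadTerm e f ∈ Submodule.span R[X] (leadTerm e '' S)) :
    ∃ g ∈ S, ∃ b ≤ a, lead e g = e.symm (b, j) := by
  by_contra! hS
  -- The vectors whose `j`-th entry is divisible by `x ^ (a + 1)` contain every leading term
  -- of `S`, but not that of `f`.
  let N : Submodule R[X] (Fin q → R[X]) :=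
    Submodule.comap (LinearMap.proj j) (Ideal.span {(X : R[X]) ^ (a + 1)})
  have hspan : Submodule.span R[X] (leadTerm e '' S) ≤ N := by
    rw [Submodule.span_le]
    rintro _ ⟨g, hg, rfl⟩
    rcases eq_or_ne g 0 with rfl | hg0
    · rw [leadTerm_zero]
      exact N.zero_mem
    obtain ⟨b, i, hb⟩ := exists_lead_eq e hg0
    simp only [N, SetLike.mem_coe, Submodule.mem_comap, LinearMap.proj_apply,
      Ideal.mem_span_singleton, leadTerm_eq hb]
    rcases eq_or_ne j i with rfl | hji
    · have hab : a < b := not_le.1 fun hba => hS g hg b hba hb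
      rw [Pi.single_eq_same]
      exact (pow_dvd_pow X hab).mul_left _
    · rw [Pi.single_eq_of_ne hji]
      exact dvd_zero _
  have hdvd := hspan hmem
  simp only [N, Submodule.mem_comap, LinearMap.proj_apply, Ideal.mem_span_singleton,
    leadTerm_eq hf, Pi.single_eq_same, X_pow_dvd_iff] at hdvd
  exact (lead_eq_coe_iff.1 hf).1 (by simpa using hdvd a (Nat.lt_succ_self a))

lemma IsGroebnerBasis.exists_lead_dvd {M : Submodule R[X] (Fin q → R[X])}
    {G : Finset (Fin q → R[X])} (hG : IsGroebnerBasis e M G) {f : Fin q → R[X]} (hf : f ∈ M)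
    {a : ℕ} {j : Fin q} (h : lead e f = e.symm (a, j)) :
    ∃ g ∈ G, ∃ b ≤ a, lead e g = e.symm (b, j) :=
  exists_lead_dvd_of_leadTerm_mem_span h (hG.2 ▸ Submodule.subset_span ⟨f, hf, rfl⟩)

end CommRing

variable {F : Type*} [Field F]

/- The `F`-span of the standard monomials `x ^ a e_j`, `a < L j`. -/
variable (F) in
noncomputable def stair (L : Fin q → ℕ) : Submodule F (Fin q → F[X]) :=
  Submodule.pi Set.univ fun j => degreeLT F (L j)

lemma mem_stair {L : Fin q → ℕ} {f : Fin q → F[X]} :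
    f ∈ stair F L ↔ ∀ j a, L j ≤ a → (f j).coeff a = 0 := by
  simp [stair, Submodule.mem_pi, mem_degreeLT, degree_lt_iff_coeff_zero]

lemma finrank_stair (L : Fin q → ℕ) : Module.finrank F (stair F L) = ∑ j, L j := by
  let ι := LinearMap.piMap fun j => (degreeLT F (L j)).subtype
  have hrange : stair F L = LinearMap.range ι := by
    ext f
    simp only [stair, Submodule.mem_pi, Set.mem_univ, true_implies, LinearMap.mem_range]
    exact ⟨fun h => ⟨fun j => ⟨f j, h j⟩, rfl⟩, by rintro ⟨y, rfl⟩ j; exact (y j).2⟩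
  have hι : Function.Injective ι := fun x y h => funext fun j => Subtype.ext (congrFun h j)
  rw [hrange, LinearMap.finrank_range_of_inj hι, Module.finrank_pi_fintype]
  simp [Module.finrank_eq_card_basis (degreeLT.basis F _)]

variable [LinearOrder σ]

lemma lead_C_mul_X_pow_smul (ho : IsTermOrder e) {c : F} (hc : c ≠ 0) (δ : ℕ)
    {f : Fin q → F[X]} {a : ℕ} {j : Fin q} (h : lead e f = e.symm (a, j)) :
    lead e ((C c * X ^ δ) • f) = e.symm (δ + a, j) := by
  have hcoeff : ∀ (i : Fin q) (n : ℕ), (((C c * X ^ δ) • f) i).coeff n =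
      if δ ≤ n then c * (f i).coeff (n - δ) else 0 := by
    intro i n
    rw [Pi.smul_apply, smul_eq_mul, mul_assoc, coeff_C_mul, coeff_X_pow_mul']
    split_ifs <;> simp
  have hshift : ∀ b i, shift e δ (e.symm (b, i)) = e.symm (δ + b, i) := by simp [shift]
  obtain ⟨hlc, hgt⟩ := lead_eq_coe_iff.1 h
  refine lead_eq_coe_iff.2 ⟨?_, fun ν hν => ?_⟩
  · rw [coeffAt_symm] at hlc
    rw [coeffAt_symm, hcoeff, if_pos (Nat.le_add_right _ _), Nat.add_sub_cancel_left]
    exact mul_ne_zero hc hlc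
  · obtain ⟨⟨n, i⟩, rfl⟩ := e.symm.surjective ν
    rw [coeffAt_symm, hcoeff]
    split_ifs with hn
    · obtain ⟨b, rfl⟩ := Nat.exists_eq_add_of_le hn
      rw [← hshift, ← hshift, (ho.shift_strictMono δ).lt_iff_lt] at hν
      simpa using Or.inr (hgt _ hν)
    · rfl

lemma IsMinimalGroebnerBasis.lt_of_lead_eq {M : Submodule F[X] (Fin q → F[X])}
    {G : Finset (Fin q → F[X])} (hG : IsMinimalGroebnerBasis e M G) {g g' : Fin q → F[X]}
    (hg : g ∈ G) (hg' : g' ∈ G) (hne : g ≠ g') {a b : ℕ} {j : Fin q}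
    (h : lead e g = e.symm (b, j)) (h' : lead e g' = e.symm (a, j)) : a < b := by
  by_contra! hba
  obtain ⟨δ, rfl⟩ := Nat.exists_eq_add_of_le hba
  have hc : (g j).coeff b ≠ 0 := by simpa using (lead_eq_coe_iff.1 h).1
  have hc' : (g' j).coeff (b + δ) ≠ 0 := by simpa using (lead_eq_coe_iff.1 h').1
  set β := (g' j).coeff (b + δ) / (g j).coeff b
  have hβ : β * (g j).coeff b = (g' j).coeff (b + δ) := div_mul_cancel₀ _ hc
  refine hG.2 g' hg' _ ⟨ne_zero_of_lead_eq h', 1, fun _ => g, fun _ => δ, fun _ => β, one_pos,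
    fun _ => Finset.mem_erase.2 ⟨hne, hg⟩, fun _ => ne_zero_of_lead_eq h,
    fun _ _ _ => Subsingleton.elim _ _, fun _ => div_ne_zero hc' hc, fun _ => ?_, ?_, rfl⟩
  · simp [h, h', shift, add_comm]
  · rw [Fin.sum_univ_one, leadTerm_eq h, leadTerm_eq h']
    funext i
    rcases eq_or_ne i j with rfl | hij
    · simp only [Pi.smul_apply, Pi.single_eq_same, smul_eq_mul]
      rw [← hβ, C_mul, pow_add]
      ring
    · simp [Pi.single_eq_of_ne hij]

lemma disjoint_stair {M : Submodule F[X] (Fin q → F[X])} {L : Fin q → ℕ}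
    (hM : ∀ f ∈ M, ∀ a j, lead e f = e.symm (a, j) → L j ≤ a) :
    Disjoint (M.restrictScalars F) (stair F L) := by
  refine Submodule.disjoint_def.2 fun f hfM hfL => ?_
  by_contra hf
  obtain ⟨a, j, h⟩ := exists_lead_eq e hf
  refine (lead_eq_coe_iff.1 h).1 ?_
  rw [coeffAt_symm]
  exact mem_stair.1 hfL j a (hM f hfM a j h)

lemma codisjoint_stair [WellFoundedLT σ] (ho : IsTermOrder e)
    {M : Submodule F[X] (Fin q → F[X])} {L : Fin q → ℕ}
    (hgen : ∀ j, ∃ g ∈ M, lead e g = e.symm (L j, j)) :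
    Codisjoint (M.restrictScalars F) (stair F L) := by
  rw [codisjoint_iff, eq_top_iff]
  set N := M.restrictScalars F ⊔ stair F L
  suffices h : ∀ w : WithBot σ, ∀ f, lead e f = w → f ∈ N from fun f _ => h _ f rfl
  intro w
  induction w using WellFoundedLT.induction with
  | _ w ih =>
  intro f hf
  rcases eq_or_ne f 0 with rfl | hf0
  · exact N.zero_mem
  obtain ⟨a, j, hμ⟩ := exists_lead_eq e hf0
  have hc : (f j).coeff a ≠ 0 := by simpa using (lead_eq_coe_iff.1 hμ).1
  obtain ⟨t, htN, ht, htc⟩ :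
      ∃ t ∈ N, lead e t = e.symm (a, j) ∧ (t j).coeff a = (f j).coeff a := by
    by_cases haL : L j ≤ a
    · obtain ⟨g, hgM, hg⟩ := hgen j
      obtain ⟨δ, rfl⟩ := Nat.exists_eq_add_of_le haL
      have hcg : (g j).coeff (L j) ≠ 0 := by simpa using (lead_eq_coe_iff.1 hg).1
      set β := (f j).coeff (L j + δ) / (g j).coeff (L j)
      refine ⟨(C β * X ^ δ) • g, Submodule.mem_sup_left (M.smul_mem _ hgM), ?_, ?_⟩
      · rw [lead_C_mul_X_pow_smul ho (div_ne_zero hc hcg) δ hg, add_comm]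
      · rw [Pi.smul_apply, smul_eq_mul, mul_assoc, coeff_C_mul, coeff_X_pow_mul]
        exact div_mul_cancel₀ _ hcg
    · refine ⟨Pi.single j (C ((f j).coeff a) * X ^ a), Submodule.mem_sup_right ?_,
        lead_single_C_mul_X_pow hc a j, by simp⟩
      refine mem_stair.2 fun i b hb => ?_
      rcases eq_or_ne i j with rfl | hij
      · rw [Pi.single_eq_same, coeff_C_mul_X_pow, if_neg (by omega)]
      · rw [Pi.single_eq_of_ne hij, coeff_zero]
  have hlt : lead e (f - t) < w := hf ▸ hμ ▸ lead_sub_lt hμ ht (by simpa using htc.symm)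
  simpa using N.add_mem (ih _ hlt (f - t) rfl) htN

theorem IsMinimalGroebnerBasis.sum_leadDeg_eq_finrank [WellFoundedLT σ] (ho : IsTermOrder e)
    {m : ℕ} {M : Submodule F[X] (Fin q → F[X])} (hrank : Module.rank F[X] M = q)
    {g : Fin m → Fin q → F[X]} (hginj : Function.Injective g) (hgz : ∀ i, g i ≠ 0)
    (hG : IsMinimalGroebnerBasis e M (Finset.image g Finset.univ)) :
    ∑ i, leadDeg e (g i) = Module.finrank F ((Fin q → F[X]) ⧸ M.restrictScalars F) := by
  choose d p hdp using fun i => exists_lead_eq e (hgz i)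
  have hgM : ∀ i, g i ∈ M := fun i => hG.1.1 (by simp)
  have hdvd : ∀ f ∈ M, ∀ a j, lead e f = e.symm (a, j) → ∃ i, p i = j ∧ d i ≤ a := by
    intro f hf a j h
    obtain ⟨_, hgG, b, hba, hb⟩ := hG.1.exists_lead_dvd hf h
    obtain ⟨i, -, rfl⟩ := Finset.mem_image.1 hgG
    obtain ⟨rfl, rfl⟩ : d i = b ∧ p i = j := by simpa using (hdp i).symm.trans hb
    exact ⟨i, rfl, hba⟩
  have hinj : Function.Injective p := by
    intro i k hik
    by_contra hne
    have hki := hG.lt_of_lead_eq (by simp) (by simp) (hginj.ne hne) (hdp i) (hik ▸ hdp k)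
    have hik' := hG.lt_of_lead_eq (by simp) (by simp) (hginj.ne (Ne.symm hne)) (hdp k)
      (hik ▸ hdp i)
    omega
  have hsurj : Function.Surjective p := by
    intro j
    obtain ⟨r, hr, hrM⟩ := exists_single_mem_of_rank_eq M hrank j
    obtain ⟨a, i, h⟩ := exists_lead_eq e (Pi.single_ne_zero_iff.2 hr)
    obtain rfl := eq_of_lead_single h
    obtain ⟨k, hk, -⟩ := hdvd _ hrM _ _ h
    exact ⟨k, hk⟩
  let π := Equiv.ofBijective p ⟨hinj, hsurj⟩
  have hcompl : IsCompl (M.restrictScalars F) (stair F (d ∘ π.symm)) := by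
    refine ⟨disjoint_stair (e := e) fun f hf a j h => ?_,
      codisjoint_stair ho fun j => ⟨g (π.symm j), hgM _, ?_⟩⟩
    · obtain ⟨i, rfl, hi⟩ := hdvd f hf a j h
      show d (π.symm (π i)) ≤ a
      rwa [π.symm_apply_apply]
    · simpa only [Function.comp_apply, show p (π.symm j) = j from π.apply_symm_apply j] using
        hdp (π.symm j)
  rw [(Submodule.quotientEquivOfIsCompl _ _ hcompl).finrank_eq, finrank_stair]
  simp [leadDeg_eq (hdp _), Equiv.sum_comp π.symm d]

/- `vlm`, `vlt`, `vdeg`, `IsMinimalGroebner` are definitionally `lead`, `leadTerm`, `leadDeg`,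
`IsMinimalGroebnerBasis` for `topEquiv`, and their `Pot` variants are those for `potEquiv`. -/
def topEquiv (q : ℕ) : Lex (ℕ × Fin q) ≃ ℕ × Fin q := ofLex

def potEquiv (q : ℕ) : Lex (Fin q × ℕ) ≃ ℕ × Fin q := ofLex.trans (Equiv.prodComm _ _)

lemma isTermOrder_topEquiv : IsTermOrder (topEquiv q) := by
  refine ⟨fun δ μ ν h => ?_⟩
  rw [← toLex_ofLex μ, ← toLex_ofLex ν, Prod.Lex.toLex_lt_toLex] at h
  show toLex (δ + (ofLex μ).1, (ofLex μ).2) < toLex (δ + (ofLex ν).1, (ofLex ν).2)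
  rw [Prod.Lex.toLex_lt_toLex]
  dsimp only at h ⊢
  omega

lemma isTermOrder_potEquiv : IsTermOrder (potEquiv q) := by
  refine ⟨fun δ μ ν h => ?_⟩
  rw [← toLex_ofLex μ, ← toLex_ofLex ν, Prod.Lex.toLex_lt_toLex] at h
  show toLex ((ofLex μ).1, δ + (ofLex μ).2) < toLex ((ofLex ν).1, δ + (ofLex ν).2)
  rw [Prod.Lex.toLex_lt_toLex]
  dsimp only at h ⊢
  omega

end TermOrder

/-- For a full-rank submodule `M ⊆ F[x]^q`, the sum of the degrees of a minimal Gröbner basis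
w.r.t. the top ordering equals the sum of the degrees of a minimal Gröbner basis w.r.t. the
pot ordering. -/
theorem sum_deg_top_eq_sum_deg_pot {F : Type*} [Field F] {q m : ℕ}
    (M : Submodule (Polynomial F) (Fin q → Polynomial F))
    (hrank : Module.rank (Polynomial F) ↥M = q)
    (g : Fin m → Fin q → Polynomial F) (hginj : Function.Injective g) (hgz : ∀ i, g i ≠ 0)
    (hGB : IsMinimalGroebner M (Finset.image g Finset.univ))
    (gt : Fin m → Fin q → Polynomial F) (hgtinj : Function.Injective gt) (hgtz : ∀ i, gt i ≠ 0)
    (hGBt : IsMinimalGroebnerPot M (Finset.image gt Finset.univ)) :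
    ∑ i, vdeg (g i) = ∑ i, vdegPot (gt i) := by
  have htop := TermOrder.IsMinimalGroebnerBasis.sum_leadDeg_eq_finrank
    TermOrder.isTermOrder_topEquiv hrank hginj hgz hGB
  have hpot := TermOrder.IsMinimalGroebnerBasis.sum_leadDeg_eq_finrank
    TermOrder.isTermOrder_potEquiv hrank hgtinj hgtz hGBt
  exact htop.trans hpot.symm
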